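/- Let n ≥ 1, D = 2^n, δ ≥ 0, and let μ be a probability measure on the unit sphere of ℂ^D such that E_{ψ∼μ}[P_ψ(x)] = 1/D for every x ∈ {0,1}^n and |E_{ψ∼μ}[P_ψ(x)P_ψ(y)] − (1+δ_{x,y})/(D(D+1))| ≤ δ·D^{−3} for all x, y ∈ {0,1}^n (δ_{x,y} the Kronecker delta). Then for every function φ : {0,1}^n → [−1,1] and every τ > 0, μ{ψ : |P_ψ[φ] − 𝒰[φ]| > τ} ≤ (2+δ)/(D·τ²). -/

import Mathlib

/-! Chebyshev's inequality applied to `X ψ = P_ψ[φ] = ∑ₓ ‖ψ x‖² φ x`. The first moments give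
`E[X] = 𝒰[φ]`, and the second moments make `Var[X]` a quadratic form in `φ`: for an exact
2-design it equals `((∑ φ)² + ∑ φ²) / (D (D + 1)) - (∑ φ)² / D² ≤ 1 / D`, and the `δ · D⁻³`
error on each of the `D²` entries adds at most `δ / D`. -/

open MeasureTheory

/-- The Borel measurable structure on `EuclideanSpace ℂ ι`. -/
noncomputable instance euclideanComplexMeasurableSpace (ι : Type*) :
    MeasurableSpace (EuclideanSpace ℂ ι) :=
  MeasurableSpace.comap WithLp.ofLp MeasurableSpace.pi

open ProbabilityTheory Finset

section QuadraticForm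

variable {ι : Type*} [Fintype ι]

lemma sum_sum_mul_mul_one_add_ite {R : Type*} [CommRing R] [DecidableEq ι] (φ : ι → R) :
    ∑ x, ∑ y, φ x * φ y * (1 + if x = y then 1 else 0) = (∑ x, φ x) ^ 2 + ∑ x, φ x ^ 2 := by
  simp only [mul_add, mul_one, mul_ite, mul_zero, sum_add_distrib, sum_ite_eq, mem_univ,
    if_true, sq, sum_mul_sum]

lemma sum_sum_mul_mul_le_add {φ : ι → ℝ} (hφ : ∀ x, |φ x| ≤ 1) {M W : ι → ι → ℝ} {ε : ℝ}
    (hMW : ∀ x y, |M x y - W x y| ≤ ε) :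
    ∑ x, ∑ y, φ x * φ y * M x y
      ≤ ∑ x, ∑ y, φ x * φ y * W x y + (Fintype.card ι : ℝ) ^ 2 * ε := by
  have hterm : ∀ x y, φ x * φ y * M x y ≤ φ x * φ y * W x y + ε := fun x y => by
    have hφφ : |φ x * φ y| ≤ 1 := by
      rw [abs_mul]; exact mul_le_one₀ (hφ x) (abs_nonneg _) (hφ y)
    have hdiff := calc φ x * φ y * (M x y - W x y) ≤ |φ x * φ y * (M x y - W x y)| := le_abs_self _
      _ = |φ x * φ y| * |M x y - W x y| := abs_mul _ _
      _ ≤ 1 * ε := mul_le_mul hφφ (hMW x y) (abs_nonneg _) zero_le_one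
    linarith
  calc ∑ x, ∑ y, φ x * φ y * M x y ≤ ∑ x, ∑ y, (φ x * φ y * W x y + ε) :=
        sum_le_sum fun x _ => sum_le_sum fun y _ => hterm x y
    _ = _ := by simp only [sum_add_distrib, sum_const, card_univ, nsmul_eq_mul]; ring

lemma sum_sum_mul_mul_sub_sq_le [Nonempty ι] [DecidableEq ι] {φ : ι → ℝ} (hφ : ∀ x, |φ x| ≤ 1)
    {M : ι → ι → ℝ} {δ : ℝ} (hM : ∀ x y, |M x y - (1 + if x = y then 1 else 0) /
      (Fintype.card ι * (Fintype.card ι + 1))| ≤ δ / (Fintype.card ι : ℝ) ^ 3) :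
    ∑ x, ∑ y, φ x * φ y * M x y - ((∑ x, φ x) / Fintype.card ι) ^ 2
      ≤ (1 + δ) / Fintype.card ι := by
  set D : ℝ := (Fintype.card ι : ℝ)
  have hD : 0 < D := by positivity
  have hQ : ∑ x, φ x ^ 2 ≤ D := by
    calc ∑ x, φ x ^ 2 ≤ ∑ _x : ι, (1 : ℝ) :=
          sum_le_sum fun x _ => by simpa using sq_le_one_iff_abs_le_one _ |>.mpr (hφ x)
      _ = D := by simp [D]
  have hW : ∑ x, ∑ y, φ x * φ y * ((1 + if x = y then 1 else 0) / (D * (D + 1)))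
      = ((∑ x, φ x) ^ 2 + ∑ x, φ x ^ 2) / (D * (D + 1)) := by
    simp only [← mul_div_assoc, ← sum_div, sum_sum_mul_mul_one_add_ite]
  have h : ∑ x, ∑ y, φ x * φ y * M x y
      ≤ ((∑ x, φ x) ^ 2 + ∑ x, φ x ^ 2) / (D * (D + 1)) + D ^ 2 * (δ / D ^ 3) :=
    hW ▸ sum_sum_mul_mul_le_add hφ hM
  have hS : (∑ x, φ x) ^ 2 / (D * (D + 1)) ≤ ((∑ x, φ x) / D) ^ 2 := by
    rw [div_pow]
    exact div_le_div_of_nonneg_left (sq_nonneg _) (by positivity) (by nlinarith)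
  have hQ' : (∑ x, φ x ^ 2) / (D * (D + 1)) ≤ 1 / D := by
    rw [div_le_div_iff₀ (by positivity) hD]; nlinarith
  have hε : D ^ 2 * (δ / D ^ 3) = δ / D := by field_simp
  rw [add_div, hε] at h
  rw [add_div]
  linarith

end QuadraticForm

section RandomVector

variable {Ω ι : Type*} [MeasurableSpace Ω] {μ : Measure Ω} [Fintype ι] {p : Ω → ι → ℝ}

lemma memLp_sum_mul (hp : ∀ x, MemLp (fun ω => p ω x) 2 μ) (φ : ι → ℝ) :
    MemLp (fun ω => ∑ x, p ω x * φ x) 2 μ :=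
  memLp_finsetSum _ fun x _ => (hp x).mul_const (φ x)

lemma integral_sum_mul [IsFiniteMeasure μ] (hp : ∀ x, MemLp (fun ω => p ω x) 2 μ)
    (φ : ι → ℝ) : ∫ ω, ∑ x, p ω x * φ x ∂μ = ∑ x, (∫ ω, p ω x ∂μ) * φ x := by
  rw [integral_finsetSum _ fun x _ => ((hp x).integrable one_le_two).mul_const _]
  simp only [integral_mul_const]

lemma integral_sum_mul_sq (hp : ∀ x, MemLp (fun ω => p ω x) 2 μ) (φ : ι → ℝ) :
    ∫ ω, (∑ x, p ω x * φ x) ^ 2 ∂μ = ∑ x, ∑ y, φ x * φ y * ∫ ω, p ω x * p ω y ∂μ := by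
  have hint : ∀ x y, Integrable (fun ω => φ x * φ y * (p ω x * p ω y)) μ := fun x y =>
    ((hp x).integrable_mul (hp y)).const_mul _
  have hexpand : ∀ ω, (∑ x, p ω x * φ x) ^ 2 = ∑ x, ∑ y, φ x * φ y * (p ω x * p ω y) := by
    intro ω
    rw [sq, sum_mul_sum]
    exact sum_congr rfl fun x _ => sum_congr rfl fun y _ => by ring
  simp_rw [hexpand]
  rw [integral_finsetSum _ fun x _ => integrable_finsetSum _ fun y _ => hint x y]
  refine sum_congr rfl fun x _ => ?_
  rw [integral_finsetSum _ fun y _ => hint x y]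
  simp only [integral_const_mul]

theorem variance_sum_mul_le [IsProbabilityMeasure μ] [Nonempty ι] [DecidableEq ι]
    (hp : ∀ x, MemLp (fun ω => p ω x) 2 μ)
    (hmom1 : ∀ x, ∫ ω, p ω x ∂μ = (Fintype.card ι : ℝ)⁻¹) {δ : ℝ}
    (hmom2 : ∀ x y, |∫ ω, p ω x * p ω y ∂μ - (1 + if x = y then 1 else 0) /
      (Fintype.card ι * (Fintype.card ι + 1))| ≤ δ / (Fintype.card ι : ℝ) ^ 3)
    {φ : ι → ℝ} (hφ : ∀ x, |φ x| ≤ 1) :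
    Var[fun ω => ∑ x, p ω x * φ x; μ] ≤ (1 + δ) / Fintype.card ι := by
  rw [variance_eq_sub (memLp_sum_mul hp φ)]
  simp only [Pi.pow_apply, integral_sum_mul_sq hp, integral_sum_mul hp, hmom1, ← sum_div,
    inv_mul_eq_div]
  exact sum_sum_mul_mul_sub_sq_le hφ hmom2

theorem measure_abs_sum_mul_sub_gt_le [IsProbabilityMeasure μ] [Nonempty ι] [DecidableEq ι]
    (hp : ∀ x, MemLp (fun ω => p ω x) 2 μ)
    (hmom1 : ∀ x, ∫ ω, p ω x ∂μ = (Fintype.card ι : ℝ)⁻¹) {δ : ℝ}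
    (hmom2 : ∀ x y, |∫ ω, p ω x * p ω y ∂μ - (1 + if x = y then 1 else 0) /
      (Fintype.card ι * (Fintype.card ι + 1))| ≤ δ / (Fintype.card ι : ℝ) ^ 3)
    {φ : ι → ℝ} (hφ : ∀ x, |φ x| ≤ 1) {τ : ℝ} (hτ : 0 < τ) :
    μ {ω | |∑ x, p ω x * φ x - (∑ x, φ x) / Fintype.card ι| > τ}
      ≤ ENNReal.ofReal ((1 + δ) / (Fintype.card ι * τ ^ 2)) := by
  have hmean : ∫ ω, ∑ x, p ω x * φ x ∂μ = (∑ x, φ x) / Fintype.card ι := by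
    simp only [integral_sum_mul hp, hmom1, ← sum_div, inv_mul_eq_div]
  calc μ {ω | |∑ x, p ω x * φ x - (∑ x, φ x) / Fintype.card ι| > τ}
      ≤ μ {ω | τ ≤ |∑ x, p ω x * φ x - ∫ ω, ∑ x, p ω x * φ x ∂μ|} :=
        measure_mono fun ω h => by rw [Set.mem_ofPred_eq, hmean]; exact h.le
    _ ≤ ENNReal.ofReal (Var[fun ω => ∑ x, p ω x * φ x; μ] / τ ^ 2) :=
        meas_ge_le_variance_div_sq (memLp_sum_mul hp φ) hτ
    _ ≤ ENNReal.ofReal ((1 + δ) / (Fintype.card ι * τ ^ 2)) := by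
        rw [← div_div]
        exact ENNReal.ofReal_le_ofReal <|
          div_le_div_of_nonneg_right (variance_sum_mul_le hp hmom1 hmom2 hφ) (sq_nonneg τ)

end RandomVector

section Born

variable {ι : Type*} [Fintype ι]

lemma sum_norm_sq_eq_one_of_mem_sphere {ψ : EuclideanSpace ℂ ι} (hψ : ψ ∈ Metric.sphere 0 1) :
    ∑ x, ‖ψ x‖ ^ 2 = 1 := by
  rw [← EuclideanSpace.norm_sq_eq, mem_sphere_zero_iff_norm.mp hψ, one_pow]

lemma norm_sq_apply_le_one_of_mem_sphere {ψ : EuclideanSpace ℂ ι} (hψ : ψ ∈ Metric.sphere 0 1)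
    (x : ι) : ‖ψ x‖ ^ 2 ≤ 1 :=
  sum_norm_sq_eq_one_of_mem_sphere hψ ▸
    single_le_sum (fun y _ => sq_nonneg ‖ψ y‖) (mem_univ x)

lemma memLp_norm_sq_apply {μ : Measure (EuclideanSpace ℂ ι)} [IsFiniteMeasure μ]
    (hsphere : μ (Metric.sphere 0 1) = μ Set.univ) (x : ι) :
    MemLp (fun ψ => ‖ψ x‖ ^ 2) 2 μ := by
  have hae : ∀ᵐ ψ ∂μ, ψ ∈ Metric.sphere (0 : EuclideanSpace ℂ ι) 1 :=
    (ae_iff_measure_eq Metric.isClosed_sphere.measurableSet.nullMeasurableSet).mpr hsphere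
  refine MemLp.of_bound (by fun_prop) 1 ?_
  filter_upwards [hae] with ψ hψ
  rw [Real.norm_of_nonneg (sq_nonneg _)]
  exact norm_sq_apply_le_one_of_mem_sphere hψ x

end Born

theorem stmt_13_general (n : ℕ) (δ : ℝ)
    (μ : Measure (EuclideanSpace ℂ (Fin n → Bool))) [IsProbabilityMeasure μ]
    (hsphere : μ (Metric.sphere 0 1) = 1)
    (hmom1 : ∀ x : Fin n → Bool,
      ∫ ψ, ‖(ψ x)‖ ^ 2 ∂μ = ((2 : ℝ) ^ n)⁻¹)
    (hmom2 : ∀ x y : Fin n → Bool,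
      |(∫ ψ, ‖(ψ x)‖ ^ 2 * ‖(ψ y)‖ ^ 2 ∂μ)
          - (1 + if x = y then 1 else 0) / ((2 : ℝ) ^ n * ((2 : ℝ) ^ n + 1))|
        ≤ δ / ((2 : ℝ) ^ n) ^ 3)
    (φ : (Fin n → Bool) → ℝ) (hφ : ∀ x, |φ x| ≤ 1) (τ : ℝ) (hτ : 0 < τ) :
    μ {ψ | |(∑ x : Fin n → Bool, ‖(ψ x)‖ ^ 2 * φ x)
            - (∑ x : Fin n → Bool, φ x) / 2 ^ n| > τ}
      ≤ ENNReal.ofReal ((2 + δ) / ((2 : ℝ) ^ n * τ ^ 2)) := by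
  have hD : (Fintype.card (Fin n → Bool) : ℝ) = 2 ^ n := by simp
  have hp := memLp_norm_sq_apply (hsphere.trans measure_univ.symm)
  have htail := measure_abs_sum_mul_sub_gt_le hp (hD ▸ hmom1) (hD ▸ hmom2) hφ hτ
  rw [hD] at htail
  exact htail.trans (ENNReal.ofReal_le_ofReal (by gcongr; norm_num))

/-- **Maximally distinguishable fraction for approximate 2-designs.** Let `μ` be a probability
measure on the unit sphere of `ℂ^{2^n}` such that `E_ψ[P_ψ(x)] = 1/D` for all `x` and
`|E_ψ[P_ψ(x)P_ψ(y)] − (1+δ_{x,y})/(D(D+1))| ≤ δ·D⁻³` for all `x, y` (`D = 2^n`,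
`P_ψ(x) = |ψ_x|²`).  Then for every `φ : {0,1}^n → [−1,1]` and `τ > 0`,
`μ{ψ : |P_ψ[φ] − 𝒰[φ]| > τ} ≤ (2+δ)/(D·τ²)`. -/
theorem stmt_13 (n : ℕ) (hn : 1 ≤ n) (δ : ℝ) (hδ : 0 ≤ δ)
    (μ : Measure (EuclideanSpace ℂ (Fin n → Bool))) [IsProbabilityMeasure μ]
    (hsphere : μ (Metric.sphere 0 1) = 1)
    (hmom1 : ∀ x : Fin n → Bool,
      ∫ ψ, ‖(ψ x)‖ ^ 2 ∂μ = ((2 : ℝ) ^ n)⁻¹)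
    (hmom2 : ∀ x y : Fin n → Bool,
      |(∫ ψ, ‖(ψ x)‖ ^ 2 * ‖(ψ y)‖ ^ 2 ∂μ)
          - (1 + if x = y then 1 else 0) / ((2 : ℝ) ^ n * ((2 : ℝ) ^ n + 1))|
        ≤ δ / ((2 : ℝ) ^ n) ^ 3)
    (φ : (Fin n → Bool) → ℝ) (hφ : ∀ x, |φ x| ≤ 1) (τ : ℝ) (hτ : 0 < τ) :
    μ {ψ | |(∑ x : Fin n → Bool, ‖(ψ x)‖ ^ 2 * φ x)
            - (∑ x : Fin n → Bool, φ x) / 2 ^ n| > τ}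
      ≤ ENNReal.ofReal ((2 + δ) / ((2 : ℝ) ^ n * τ ^ 2)) :=
  stmt_13_general n δ μ hsphere hmom1 hmom2 φ hφ τ hτ
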